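/- Let d ≥ 1 and ε ∈ (0,1]. If a nonzero matrix A ∈ ℝ^{d×d} satisfies the Cordes condition with parameter ε and γ := tr A / ‖A‖_F², then for every matrix M ∈ ℝ^{d×d} one has γ·(A:M)·(tr M) ≥ (tr M)² − √(1−ε)·‖M‖_F·|tr M|. (This pointwise inequality is the integrand-level estimate behind the first step of the coercivity proof (equation (3.16)) in Lemma 3.6.) -/

import Mathlib

open Matrix

/-- Frobenius inner product of two `d × d` real matrices. -/
noncomputable def frobInner {d : ℕ} (A B : Matrix (Fin d) (Fin d) ℝ) : ℝ :=
  ∑ i, ∑ j, A i j * B i j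

/-- Frobenius norm of a `d × d` real matrix. -/
noncomputable def frobNorm {d : ℕ} (A : Matrix (Fin d) (Fin d) ℝ) : ℝ :=
  Real.sqrt (frobInner A A)

/-- The Cordes condition with parameter `ε`. -/
def CordesCond {d : ℕ} (ε : ℝ) (A : Matrix (Fin d) (Fin d) ℝ) : Prop :=
  ((d : ℝ) - 1 + ε) * frobNorm A ^ 2 ≤ trace A ^ 2

/-!
With `γ = tr A / ‖A‖²`, the identity `γ (A : M) = (γA - I) : M + tr M` reduces the estimate to
Cauchy–Schwarz for the deviation `γA - I`, whose squared norm is `d - (tr A)² / ‖A‖² ≤ 1 - ε`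
by the Cordes condition.
-/

section Frobenius

variable {d : ℕ}

lemma frobInner_comm (A B : Matrix (Fin d) (Fin d) ℝ) : frobInner A B = frobInner B A := by
  simp only [frobInner, mul_comm]

lemma frobInner_sub_left (A B M : Matrix (Fin d) (Fin d) ℝ) :
    frobInner (A - B) M = frobInner A M - frobInner B M := by
  simp only [frobInner, Matrix.sub_apply, sub_mul, Finset.sum_sub_distrib]

lemma frobInner_smul_left (c : ℝ) (A M : Matrix (Fin d) (Fin d) ℝ) :
    frobInner (c • A) M = c * frobInner A M := by
  simp only [frobInner, Matrix.smul_apply, smul_eq_mul, mul_assoc, Finset.mul_sum]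

lemma frobInner_one_left (M : Matrix (Fin d) (Fin d) ℝ) : frobInner 1 M = trace M := by
  simp [frobInner, one_apply, trace]

lemma frobInner_self_nonneg (A : Matrix (Fin d) (Fin d) ℝ) : 0 ≤ frobInner A A :=
  Finset.sum_nonneg fun _ _ => Finset.sum_nonneg fun _ _ => mul_self_nonneg _

lemma frobNorm_sq (A : Matrix (Fin d) (Fin d) ℝ) : frobNorm A ^ 2 = frobInner A A :=
  Real.sq_sqrt (frobInner_self_nonneg A)

lemma frobInner_self_pos {A : Matrix (Fin d) (Fin d) ℝ} (hA : A ≠ 0) : 0 < frobInner A A := by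
  refine (frobInner_self_nonneg A).lt_of_ne fun h => hA ?_
  ext i j
  have hrow := (Finset.sum_eq_zero_iff_of_nonneg fun i _ =>
    Finset.sum_nonneg fun j _ => mul_self_nonneg (A i j)).mp h.symm i (Finset.mem_univ i)
  have hij := (Finset.sum_eq_zero_iff_of_nonneg fun j _ =>
    mul_self_nonneg (A i j)).mp hrow j (Finset.mem_univ j)
  simpa using hij

lemma sq_frobInner_le (A B : Matrix (Fin d) (Fin d) ℝ) :
    frobInner A B ^ 2 ≤ frobInner A A * frobInner B B := by
  simp only [frobInner, ← Fintype.sum_prod_type', ← sq]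
  exact Finset.sum_mul_sq_le_sq_mul_sq _ _ _

lemma abs_frobInner_le (A B : Matrix (Fin d) (Fin d) ℝ) :
    |frobInner A B| ≤ frobNorm A * frobNorm B := by
  rw [frobNorm, frobNorm, ← Real.sqrt_mul (frobInner_self_nonneg A)]
  exact Real.abs_le_sqrt (sq_frobInner_le A B)

lemma frobInner_smul_sub_one_left (c : ℝ) (A M : Matrix (Fin d) (Fin d) ℝ) :
    frobInner (c • A - 1) M = c * frobInner A M - trace M := by
  rw [frobInner_sub_left, frobInner_smul_left, frobInner_one_left]

lemma frobInner_self_smul_sub_one (c : ℝ) (A : Matrix (Fin d) (Fin d) ℝ) :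
    frobInner (c • A - 1) (c • A - 1) = c ^ 2 * frobInner A A - 2 * c * trace A + d := by
  rw [frobInner_smul_sub_one_left, frobInner_comm, frobInner_smul_sub_one_left, trace_sub,
    trace_smul, trace_one, Fintype.card_fin, smul_eq_mul]
  ring

end Frobenius

lemma CordesCond.frobNorm_smul_sub_one_le {d : ℕ} {ε : ℝ} {A : Matrix (Fin d) (Fin d) ℝ}
    (hC : CordesCond ε A) (hA : A ≠ 0) :
    frobNorm ((trace A / frobNorm A ^ 2) • A - 1) ≤ √(1 - ε) := by
  refine Real.sqrt_le_sqrt ?_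
  have hpos := frobInner_self_pos hA
  rw [CordesCond, frobNorm_sq] at hC
  rw [frobNorm_sq, frobInner_self_smul_sub_one]
  field_simp
  linarith

theorem cordes_lower_bound_estimate_general {d : ℕ} {ε : ℝ}
    (A : Matrix (Fin d) (Fin d) ℝ) (hA : A ≠ 0) (hC : CordesCond ε A)
    (M : Matrix (Fin d) (Fin d) ℝ) :
    (trace A / frobNorm A ^ 2) * frobInner A M * trace M
      ≥ trace M ^ 2 - Real.sqrt (1 - ε) * frobNorm M * |trace M| := by
  set γ := trace A / frobNorm A ^ 2
  have hsplit : γ * frobInner A M * trace M = frobInner (γ • A - 1) M * trace M + trace M ^ 2 := by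
    rw [frobInner_smul_sub_one_left]
    ring
  have hdev : |frobInner (γ • A - 1) M * trace M| ≤ √(1 - ε) * frobNorm M * |trace M| := by
    rw [abs_mul]
    gcongr
    exact (abs_frobInner_le _ _).trans
      (mul_le_mul_of_nonneg_right (hC.frobNorm_smul_sub_one_le hA) (Real.sqrt_nonneg _))
  linarith [neg_abs_le (frobInner (γ • A - 1) M * trace M)]

theorem cordes_lower_bound_estimate {d : ℕ} (hd : 1 ≤ d) {ε : ℝ}
    (hε0 : 0 < ε) (hε1 : ε ≤ 1)
    (A : Matrix (Fin d) (Fin d) ℝ) (hA : A ≠ 0) (hC : CordesCond ε A)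
    (M : Matrix (Fin d) (Fin d) ℝ) :
    (trace A / frobNorm A ^ 2) * frobInner A M * trace M
      ≥ trace M ^ 2 - Real.sqrt (1 - ε) * frobNorm M * |trace M| :=
  cordes_lower_bound_estimate_general A hA hC M
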